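/- Let Γ be a lattice in E = EuclideanSpace ℝ (Fin n), let λ < 0 be a real number, and let φ : E → ℂ be a smooth, nonconstant, Γ-periodic function. Then the following are equivalent: (1) Δφ = λ·φ and κ(φ,φ) = λ·φ² on E (φ is a (λ,λ)-eigenfunction); (2) φ is nowhere vanishing, |φ| is constant on E, and the unit-modulus function ψ(x) = φ(x)/|φ(x)| satisfies Δψ = λ·ψ and Σ_{a=1}^n |(∂ψ/∂x_a)(x)|² = −λ for every x ∈ E. -/

import Mathlib

open MeasureTheory Set

noncomputable section

/-- The flat Laplacian `Δf(x) = ∑ₐ ∂²f/∂xₐ²(x)` on Euclidean space. -/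
noncomputable def lap {m : ℕ} {F : Type*} [NormedAddCommGroup F] [NormedSpace ℝ F]
    (f : EuclideanSpace ℝ (Fin m) → F) (x : EuclideanSpace ℝ (Fin m)) : F :=
  ∑ a : Fin m, fderiv ℝ (fun y => fderiv ℝ f y (EuclideanSpace.single a 1)) x
    (EuclideanSpace.single a 1)

/-- The conformality operator `κ(φ,ψ)(x) = ∑ₐ (∂φ/∂xₐ)(x)·(∂ψ/∂xₐ)(x)`. -/
noncomputable def kap {m : ℕ} {F : Type*} [NormedRing F] [NormedAlgebra ℝ F]
    (φ ψ : EuclideanSpace ℝ (Fin m) → F) (x : EuclideanSpace ℝ (Fin m)) : F :=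
  ∑ a : Fin m, fderiv ℝ φ x (EuclideanSpace.single a 1) * fderiv ℝ ψ x (EuclideanSpace.single a 1)

section Helpers

variable {n : ℕ} {F G : Type*} [NormedAddCommGroup F] [NormedSpace ℝ F]
  [NormedAddCommGroup G] [NormedSpace ℝ G]

theorem contDiff_fderiv_apply {f : EuclideanSpace ℝ (Fin n) → F}
    (hf : ContDiff ℝ (⊤:ℕ∞) f) (c : EuclideanSpace ℝ (Fin n)) :
    ContDiff ℝ (⊤:ℕ∞) (fun y => fderiv ℝ f y c) :=
  (hf.fderiv_right (le_of_eq (by rfl))).clm_apply contDiff_const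

theorem diffble_of_top {f : EuclideanSpace ℝ (Fin n) → F} (hf : ContDiff ℝ (⊤:ℕ∞) f) :
    Differentiable ℝ f := hf.differentiable (by simp)

theorem fderiv_clm_comp_apply {f : EuclideanSpace ℝ (Fin n) → F} (L : F →L[ℝ] G)
    (hf : Differentiable ℝ f) (x v : EuclideanSpace ℝ (Fin n)) :
    fderiv ℝ (fun y => L (f y)) x v = L (fderiv ℝ f x v) := by
  have h2 : fderiv ℝ (fun y => L (f y)) x = L.comp (fderiv ℝ f x) :=
    (L.hasFDerivAt.comp x (hf x).hasFDerivAt).fderiv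
  rw [h2]; rfl

theorem lap_clm {f : EuclideanSpace ℝ (Fin n) → F} (L : F →L[ℝ] G)
    (hf : ContDiff ℝ (⊤:ℕ∞) f) (x : EuclideanSpace ℝ (Fin n)) :
    lap (fun y => L (f y)) x = L (lap f x) := by
  unfold lap
  rw [map_sum]
  refine Finset.sum_congr rfl fun a _ => ?_
  have h1 : (fun y => fderiv ℝ (fun z => L (f z)) y (EuclideanSpace.single a 1))
      = fun y => L (fderiv ℝ f y (EuclideanSpace.single a 1)) :=
    funext fun y => fderiv_clm_comp_apply L (diffble_of_top hf) y _
  rw [h1]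
  exact fderiv_clm_comp_apply L (diffble_of_top (contDiff_fderiv_apply hf _)) x _

theorem lap_const_mul {f : EuclideanSpace ℝ (Fin n) → ℂ} (z : ℂ)
    (hf : ContDiff ℝ (⊤:ℕ∞) f) (x : EuclideanSpace ℝ (Fin n)) :
    lap (fun y => z * f y) x = z * lap f x := by
  have hL : (fun y => z * f y) = fun y => (z • ContinuousLinearMap.id ℝ ℂ) (f y) := by
    funext y; simp [smul_eq_mul]
  rw [hL, lap_clm (z • ContinuousLinearMap.id ℝ ℂ) hf x]
  simp [smul_eq_mul]

theorem lap_conj {f : EuclideanSpace ℝ (Fin n) → ℂ}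
    (hf : ContDiff ℝ (⊤:ℕ∞) f) (x : EuclideanSpace ℝ (Fin n)) :
    lap (fun y => (starRingEnd ℂ) (f y)) x = (starRingEnd ℂ) (lap f x) := by
  have hL : (fun y => (starRingEnd ℂ) (f y))
      = fun y => (Complex.conjCLE : ℂ →L[ℝ] ℂ) (f y) := by
    funext y; simp
  rw [hL, lap_clm _ hf x]; simp

theorem fderiv_conj_apply {f : EuclideanSpace ℝ (Fin n) → ℂ} (hf : Differentiable ℝ f)
    (x v : EuclideanSpace ℝ (Fin n)) :
    fderiv ℝ (fun y => (starRingEnd ℂ) (f y)) x v = (starRingEnd ℂ) (fderiv ℝ f x v) := by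
  have hL : (fun y => (starRingEnd ℂ) (f y))
      = fun y => (Complex.conjCLE : ℂ →L[ℝ] ℂ) (f y) := by
    funext y; simp
  rw [hL, fderiv_clm_comp_apply _ hf]; simp

theorem fderiv_mul_apply {f g : EuclideanSpace ℝ (Fin n) → ℂ}
    {x : EuclideanSpace ℝ (Fin n)}
    (hf : DifferentiableAt ℝ f x) (hg : DifferentiableAt ℝ g x)
    (v : EuclideanSpace ℝ (Fin n)) :
    fderiv ℝ (fun y => f y * g y) x v = f x * fderiv ℝ g x v + g x * fderiv ℝ f x v := by
  rw [fderiv_fun_mul hf hg]; simp [smul_eq_mul]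

theorem fderiv_const_mul_apply {f : EuclideanSpace ℝ (Fin n) → ℂ}
    {x : EuclideanSpace ℝ (Fin n)} (hf : DifferentiableAt ℝ f x) (z : ℂ)
    (v : EuclideanSpace ℝ (Fin n)) :
    fderiv ℝ (fun y => z * f y) x v = z * fderiv ℝ f x v := by
  rw [fderiv_const_mul hf z]; simp [smul_eq_mul]

theorem lap_mul {f g : EuclideanSpace ℝ (Fin n) → ℂ}
    (hf : ContDiff ℝ (⊤:ℕ∞) f) (hg : ContDiff ℝ (⊤:ℕ∞) g) (x : EuclideanSpace ℝ (Fin n)) :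
    lap (fun y => f y * g y) x = f x * lap g x + g x * lap f x + 2 * kap f g x := by
  have hdf := diffble_of_top hf
  have hdg := diffble_of_top hg
  have h2 : ∀ a : Fin n,
      fderiv ℝ (fun y => fderiv ℝ (fun z => f z * g z) y (EuclideanSpace.single a 1)) x
        (EuclideanSpace.single a 1)
      = f x * fderiv ℝ (fun y => fderiv ℝ g y (EuclideanSpace.single a 1)) x (EuclideanSpace.single a 1)
      + g x * fderiv ℝ (fun y => fderiv ℝ f y (EuclideanSpace.single a 1)) x (EuclideanSpace.single a 1)
      + 2 * (fderiv ℝ f x (EuclideanSpace.single a 1) * fderiv ℝ g x (EuclideanSpace.single a 1)) := by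
    intro a
    have h1 : (fun y => fderiv ℝ (fun z => f z * g z) y (EuclideanSpace.single a 1))
        = fun y => f y * fderiv ℝ g y (EuclideanSpace.single a 1)
          + g y * fderiv ℝ f y (EuclideanSpace.single a 1) :=
      funext fun y => fderiv_mul_apply (hdf y) (hdg y) _
    have hdga := diffble_of_top (contDiff_fderiv_apply hg (EuclideanSpace.single a 1))
    have hdfa := diffble_of_top (contDiff_fderiv_apply hf (EuclideanSpace.single a 1))
    rw [h1, fderiv_fun_add ((hdf x).fun_mul (hdga x)) ((hdg x).fun_mul (hdfa x))]
    simp only [ContinuousLinearMap.add_apply]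
    rw [fderiv_mul_apply (hdf x) (hdga x), fderiv_mul_apply (hdg x) (hdfa x)]
    ring
  unfold lap kap
  rw [Finset.sum_congr rfl fun a _ => h2 a]
  rw [Finset.sum_add_distrib, Finset.sum_add_distrib, ← Finset.mul_sum, ← Finset.mul_sum,
    ← Finset.mul_sum]

theorem fderiv_translate {f : EuclideanSpace ℝ (Fin n) → F} (hf : Differentiable ℝ f)
    (c : EuclideanSpace ℝ (Fin n)) (hp : ∀ x, f (x + c) = f x) (x : EuclideanSpace ℝ (Fin n)) :
    fderiv ℝ f (x + c) = fderiv ℝ f x := by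
  have h1 : HasFDerivAt (fun y => f (y + c)) (fderiv ℝ f (x + c)) x := by
    simpa [Function.comp_def] using (hf (x + c)).hasFDerivAt.comp x ((hasFDerivAt_id x).add_const c)
  have h2 : (fun y => f (y + c)) = f := funext hp
  rw [h2] at h1
  exact h1.fderiv.symm

theorem key_dir_integral (b : Module.Basis (Fin n) ℝ (EuclideanSpace ℝ (Fin n)))
    (w : EuclideanSpace ℝ (Fin n) → ℝ) (hw : ContDiff ℝ (⊤:ℕ∞) w) (j : Fin n)
    (hwp : ∀ x, w (x + b j) = w x) (x : EuclideanSpace ℝ (Fin n)) :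
    ∫ t in Icc (0:Fin n → ℝ) 1, fderiv ℝ w (x + ∑ i, t i • b i) (b j) = 0 := by
  have hn : n ≠ 0 := fun h => (h ▸ j).elim0
  obtain ⟨m, rfl⟩ : ∃ m, n = m + 1 := ⟨n - 1, by omega⟩
  have hdw : Differentiable ℝ w := hw.differentiable (by simp)
  have hwc : Continuous (fun y => fderiv ℝ w y (b j)) :=
    (((hw.fderiv_right (le_of_eq (by rfl))).clm_apply contDiff_const :
      ContDiff ℝ (⊤:ℕ∞) (fun y => fderiv ℝ w y (b j)))).continuous
  set F : (Fin (m+1) → ℝ) → ℝ := fun t => fderiv ℝ w (x + ∑ i, t i • b i) (b j) with hF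
  have hcont : Continuous F := by
    apply hwc.comp
    exact continuous_const.add (continuous_finset_sum _ fun i _ =>
      (continuous_apply i).smul continuous_const)
  have hmeas : MeasurableSet (Icc (0:Fin (m+1) → ℝ) 1) := measurableSet_Icc
  rw [← integral_indicator hmeas]
  have hint : Integrable ((Icc (0:Fin (m+1) → ℝ) 1).indicator F) :=
    (hcont.continuousOn.integrableOn_compact isCompact_Icc).integrable_indicator hmeas
  set e := MeasurableEquiv.piFinSuccAbove (fun _ : Fin (m+1) => ℝ) j with he
  have hmp : MeasurePreserving e volume volume := volume_preserving_piFinSuccAbove _ j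
  have hmps : MeasurePreserving e.symm volume volume := hmp.symm e
  have hcomp := hmps.integral_comp e.symm.measurableEmbedding
    ((Icc (0:Fin (m+1) → ℝ) 1).indicator F)
  rw [← hcomp]
  have hint2 : Integrable (fun p : ℝ × (Fin m → ℝ) =>
      (Icc (0:Fin (m+1) → ℝ) 1).indicator F (e.symm p)) volume :=
    (hmps.integrable_comp_emb e.symm.measurableEmbedding).2 hint
  rw [Measure.volume_eq_prod] at hint2 ⊢
  rw [integral_prod_symm _ hint2]
  have hzero : ∀ r : Fin m → ℝ,
      (∫ s : ℝ, (Icc (0:Fin (m+1) → ℝ) 1).indicator F (e.symm (s, r))) = 0 := by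
    intro r
    have hes : ∀ s : ℝ, e.symm (s, r) = j.insertNth s r := fun s => rfl
    by_cases hr : r ∈ Icc (0:Fin m → ℝ) 1
    · set C : EuclideanSpace ℝ (Fin (m+1)) := ∑ i : Fin m, r i • b (j.succAbove i) with hC
      have hsum : ∀ s : ℝ, x + ∑ i, (j.insertNth s r : Fin (m+1) → ℝ) i • b i = (x + C) + s • b j := by
        intro s
        rw [Fin.sum_univ_succAbove (fun i => (j.insertNth s r : Fin (m+1) → ℝ) i • b i) j]
        simp only [Fin.insertNth_apply_same, Fin.insertNth_apply_succAbove]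
        rw [← hC]; abel
      have h1 : ∀ s : ℝ, (Icc (0:Fin (m+1) → ℝ) 1).indicator F (e.symm (s, r))
          = (Icc (0:ℝ) 1).indicator (fun s => fderiv ℝ w ((x + C) + s • b j) (b j)) s := by
        intro s
        rw [hes s]
        by_cases hs : s ∈ Icc (0:ℝ) 1
        · rw [indicator_of_mem hs]
          rw [indicator_of_mem]
          · show fderiv ℝ w (x + ∑ i, (j.insertNth s r : Fin (m+1) → ℝ) i • b i) (b j) = _
            rw [hsum s]
          · refine Fin.insertNth_mem_Icc.2 ⟨by simpa using hs, ?_⟩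
            exact hr
        · rw [indicator_of_notMem hs, indicator_of_notMem]
          intro hmem
          exact hs (by simpa using (Fin.insertNth_mem_Icc.1 hmem).1)
      simp only [h1]
      rw [integral_indicator measurableSet_Icc, integral_Icc_eq_integral_Ioc,
        ← intervalIntegral.integral_of_le zero_le_one]
      have hderiv : ∀ s ∈ Set.uIcc (0:ℝ) 1,
          HasDerivAt (fun s : ℝ => w ((x + C) + s • b j))
            (fderiv ℝ w ((x + C) + s • b j) (b j)) s := by
        intro s _
        have hpath : HasDerivAt (fun s : ℝ => (x + C) + s • b j) (b j) s := by
          simpa using (((hasDerivAt_id s).smul_const (b j)).const_add (x + C))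
        exact (hdw ((x + C) + s • b j)).hasFDerivAt.comp_hasDerivAt s hpath
      have hii : IntervalIntegrable (fun s : ℝ => fderiv ℝ w ((x + C) + s • b j) (b j))
          volume 0 1 := by
        apply Continuous.intervalIntegrable
        exact hwc.comp (continuous_const.add ((continuous_id.smul continuous_const)))
      rw [intervalIntegral.integral_eq_sub_of_hasDerivAt hderiv hii]
      have hper1 := hwp (x + C)
      simp only [one_smul, zero_smul, add_zero]
      rw [hper1]; ring
    · have hzz : ∀ s : ℝ, (Icc (0:Fin (m+1) → ℝ) 1).indicator F (e.symm (s, r)) = 0 := by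
        intro s
        rw [hes s]
        apply indicator_of_notMem
        intro hmem
        exact hr (Fin.insertNth_mem_Icc.1 hmem).2
      simp only [hzz, integral_zero]
  simp only [hzero, integral_zero]

theorem key_integral_lap (b : Module.Basis (Fin n) ℝ (EuclideanSpace ℝ (Fin n)))
    (u : EuclideanSpace ℝ (Fin n) → ℝ) (hu : ContDiff ℝ (⊤:ℕ∞) u)
    (hup : ∀ i : Fin n, ∀ x, u (x + b i) = u x) (x : EuclideanSpace ℝ (Fin n)) :
    ∫ t in Icc (0:Fin n → ℝ) 1, lap u (x + ∑ i, t i • b i) = 0 := by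
  have hdu := diffble_of_top hu
  have expand : ∀ (T : EuclideanSpace ℝ (Fin n) →L[ℝ] ℝ) (v : EuclideanSpace ℝ (Fin n)),
      T v = ∑ i : Fin n, (b.repr v) i • T (b i) := by
    intro T v
    conv_lhs => rw [← b.sum_repr v]
    rw [map_sum]
    exact Finset.sum_congr rfl fun i _ => T.map_smul _ _
  have hrepr : ∀ y, lap u y = ∑ a : Fin n, ∑ i : Fin n,
      (b.repr (EuclideanSpace.single a 1)) i •
        fderiv ℝ (fun z => fderiv ℝ u z (EuclideanSpace.single a 1)) y (b i) := by
    intro y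
    unfold lap
    exact Finset.sum_congr rfl fun a _ => expand _ _
  have hcont : ∀ (a i : Fin n), Continuous (fun t : Fin n → ℝ =>
      fderiv ℝ (fun z => fderiv ℝ u z (EuclideanSpace.single a 1)) (x + ∑ i', t i' • b i') (b i)) := by
    intro a i
    exact (contDiff_fderiv_apply (contDiff_fderiv_apply hu _) _).continuous.comp
      (continuous_const.add (continuous_finset_sum _ fun i' _ =>
        (continuous_apply i').smul continuous_const))
  have hintg : ∀ (a i : Fin n), IntegrableOn (fun t : Fin n → ℝ =>
      (b.repr (EuclideanSpace.single a 1)) i •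
        fderiv ℝ (fun z => fderiv ℝ u z (EuclideanSpace.single a 1)) (x + ∑ i', t i' • b i') (b i))
      (Icc (0:Fin n → ℝ) 1) volume := by
    intro a i
    exact (continuous_const.fun_smul (hcont a i)).continuousOn.integrableOn_compact isCompact_Icc
  simp only [hrepr]
  rw [integral_finset_sum _ (fun a _ => integrable_finset_sum _ (fun i _ => hintg a i))]
  refine Finset.sum_eq_zero fun a _ => ?_
  rw [integral_finset_sum _ (fun i _ => hintg a i)]
  refine Finset.sum_eq_zero fun i _ => ?_
  rw [integral_smul]
  have hwc : ContDiff ℝ (⊤:ℕ∞) (fun z => fderiv ℝ u z (EuclideanSpace.single a 1)) :=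
    contDiff_fderiv_apply hu _
  have hwper : ∀ y, (fun z => fderiv ℝ u z (EuclideanSpace.single a 1)) (y + b i)
      = (fun z => fderiv ℝ u z (EuclideanSpace.single a 1)) y := by
    intro y
    simp only
    rw [fderiv_translate hdu (b i) (hup i) y]
  rw [key_dir_integral b _ hwc i hwper x, smul_zero]

theorem eq_zero_of_integral_zero (Fn : (Fin n → ℝ) → ℝ) (hF : Continuous Fn)
    (hnn : ∀ t, 0 ≤ Fn t) (hI : ∫ t in Icc (0:Fin n → ℝ) 1, Fn t = 0)
    (t₀ : Fin n → ℝ) (ht₀ : t₀ ∈ interior (Icc (0:Fin n → ℝ) 1)) : Fn t₀ = 0 := by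
  by_contra h
  have hpos : 0 < Fn t₀ := (hnn t₀).lt_of_ne (Ne.symm h)
  set U := interior (Icc (0:Fin n → ℝ) 1) ∩ Fn ⁻¹' Ioi (Fn t₀ / 2) with hU
  have hUopen : IsOpen U := isOpen_interior.inter (isOpen_Ioi.preimage hF)
  have hUne : U.Nonempty := ⟨t₀, ht₀, by simp only [mem_preimage, mem_Ioi]; linarith⟩
  have hUpos : 0 < volume U := hUopen.measure_pos volume hUne
  have hae : Fn =ᵐ[volume.restrict (Icc (0:Fin n → ℝ) 1)] 0 :=
    (integral_eq_zero_iff_of_nonneg_ae (Filter.Eventually.of_forall hnn)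
      (hF.continuousOn.integrableOn_compact isCompact_Icc)).1 hI
  have hae' : ∀ᵐ t : Fin n → ℝ, t ∈ Icc (0:Fin n → ℝ) 1 → Fn t = 0 :=
    (ae_restrict_iff' measurableSet_Icc).1 hae
  have hsub : U ⊆ {t | ¬ (t ∈ Icc (0:Fin n → ℝ) 1 → Fn t = 0)} := by
    rintro t ⟨ht1, ht2⟩
    intro hcon
    have h1 := hcon (interior_subset ht1)
    have h2 : Fn t₀ / 2 < Fn t := ht2
    linarith
  have h0 : volume U = 0 := measure_mono_null hsub (ae_iff.1 hae')
  exact absurd h0 hUpos.ne'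

theorem lap_eq_zero_of_nonneg (b : Module.Basis (Fin n) ℝ (EuclideanSpace ℝ (Fin n)))
    (u : EuclideanSpace ℝ (Fin n) → ℝ) (hu : ContDiff ℝ (⊤:ℕ∞) u)
    (hup : ∀ i : Fin n, ∀ x, u (x + b i) = u x)
    (hnn : ∀ x, 0 ≤ lap u x) (x₀ : EuclideanSpace ℝ (Fin n)) : lap u x₀ = 0 := by
  set x : EuclideanSpace ℝ (Fin n) := x₀ - ∑ i : Fin n, (2⁻¹:ℝ) • b i with hx
  have hlapc : Continuous (lap u) := by
    unfold lap
    exact continuous_finset_sum _ fun a _ =>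
      (contDiff_fderiv_apply (contDiff_fderiv_apply hu _) _).continuous
  have hFc : Continuous (fun t : Fin n → ℝ => lap u (x + ∑ i, t i • b i)) :=
    hlapc.comp (continuous_const.add (continuous_finset_sum _ fun i _ =>
      (continuous_apply i).smul continuous_const))
  have ht₀ : (fun _ : Fin n => (2⁻¹:ℝ)) ∈ interior (Icc (0:Fin n → ℝ) 1) := by
    rw [← Set.pi_univ_Icc, interior_pi_set finite_univ]
    intro i _
    simp only [interior_Icc, mem_Ioo]
    norm_num
  have hmain := eq_zero_of_integral_zero _ hFc (fun t => hnn _)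
      (key_integral_lap b u hu hup x) _ ht₀
  have hxx : x + ∑ i : Fin n, (fun _ : Fin n => (2⁻¹:ℝ)) i • b i = x₀ := by
    rw [hx]; abel
  rw [hxx] at hmain
  exact hmain

theorem fderiv_eq_zero_of_vanish {f : EuclideanSpace ℝ (Fin n) → ℂ}
    {x : EuclideanSpace ℝ (Fin n)}
    (h : ∀ a : Fin n, fderiv ℝ f x (EuclideanSpace.single a 1) = 0) :
    fderiv ℝ f x = 0 := by
  apply ContinuousLinearMap.ext
  intro v
  have hb := (EuclideanSpace.basisFun (Fin n) ℝ).toBasis.sum_repr v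
  rw [← hb, map_sum]
  rw [ContinuousLinearMap.zero_apply]
  refine Finset.sum_eq_zero fun a _ => ?_
  rw [(fderiv ℝ f x).map_smul]
  have : ((EuclideanSpace.basisFun (Fin n) ℝ).toBasis) a = EuclideanSpace.single a 1 := by
    simp [EuclideanSpace.basisFun_apply]
  rw [this, h a, smul_zero]

end Helpers

theorem lambda_lambda_iff_harmonic_riemannian_submersion {n : ℕ}
    (Γ : Submodule ℤ (EuclideanSpace ℝ (Fin n))) [DiscreteTopology Γ] [IsZLattice ℝ Γ]
    (lam : ℝ) (hlam : lam < 0)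
    (φ : EuclideanSpace ℝ (Fin n) → ℂ) (hφ : ContDiff ℝ (⊤ : ℕ∞) φ)
    (hnc : ∃ x y, φ x ≠ φ y)
    (hper : ∀ x : EuclideanSpace ℝ (Fin n), ∀ γ ∈ Γ, φ (x + γ) = φ x)
    (ψ : EuclideanSpace ℝ (Fin n) → ℂ)
    (hψ : ∀ x, ψ x = φ x / (‖φ x‖ : ℂ)) :
    ((∀ x, lap φ x = (lam : ℂ) * φ x) ∧ (∀ x, kap φ φ x = (lam : ℂ) * (φ x) ^ 2)) ↔
    ((∀ x, φ x ≠ 0) ∧ (∃ c : ℝ, ∀ x, ‖φ x‖ = c) ∧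
      (∀ x, lap ψ x = (lam : ℂ) * ψ x) ∧
      (∀ x, ∑ a : Fin n,
        ‖fderiv ℝ ψ x (EuclideanSpace.single a 1)‖ ^ 2 = -lam)) := by
  have hφ' : ContDiff ℝ (⊤:ℕ∞) φ := hφ.of_le (by simp)
  have hdφ : Differentiable ℝ φ := diffble_of_top hφ'
  have hconjφ : ContDiff ℝ (⊤:ℕ∞) (fun x => (starRingEnd ℂ) (φ x)) := by
    have h := ((Complex.conjCLE : ℂ →L[ℝ] ℂ).contDiff (n := ((⊤:ℕ∞) : WithTop ℕ∞))).comp hφ'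
    simpa [Function.comp_def] using h
  constructor
  · rintro ⟨hEig, hConf⟩
    haveI := ZLattice.module_free ℝ Γ
    haveI := ZLattice.module_finite ℝ Γ
    have hcard : Fintype.card (Module.Free.ChooseBasisIndex ℤ ↥Γ) = n := by
      rw [← Module.finrank_eq_card_chooseBasisIndex, ZLattice.rank ℝ Γ,
        finrank_euclideanSpace_fin]
    set b : Module.Basis (Fin n) ℝ (EuclideanSpace ℝ (Fin n)) :=
      (Module.Basis.ofZLatticeBasis ℝ Γ (Module.Free.chooseBasis ℤ ↥Γ)).reindex
        (Fintype.equivFinOfCardEq hcard) with hbdef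
    have hbΓ : ∀ i, b i ∈ Γ := by
      intro i
      rw [hbdef, Module.Basis.reindex_apply, Module.Basis.ofZLatticeBasis_apply]
      exact SetLike.coe_mem _
    have hφp : ∀ (i : Fin n) x, φ (x + b i) = φ x := fun i x => hper x (b i) (hbΓ i)
    have hgcsm : ContDiff ℝ (⊤:ℕ∞) (fun x => φ x * (starRingEnd ℂ) (φ x)) := hφ'.mul hconjφ
    have hdgc : Differentiable ℝ (fun y => φ y * (starRingEnd ℂ) (φ y)) := diffble_of_top hgcsm
    have hlapconj : ∀ x, lap (fun y => (starRingEnd ℂ) (φ y)) x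
        = (lam:ℂ) * (starRingEnd ℂ) (φ x) := by
      intro x
      rw [lap_conj hφ' x, hEig x, map_mul]
      simp [Complex.conj_ofReal]
    have hkapconj : ∀ x, kap φ (fun y => (starRingEnd ℂ) (φ y)) x
        = ((∑ a : Fin n, Complex.normSq (fderiv ℝ φ x (EuclideanSpace.single a 1)) : ℝ) : ℂ) := by
      intro x
      unfold kap
      push_cast
      refine Finset.sum_congr rfl fun a _ => ?_
      rw [fderiv_conj_apply hdφ, Complex.mul_conj]
    have hlapgc : ∀ x, lap (fun y => φ y * (starRingEnd ℂ) (φ y)) x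
        = 2 * (lam:ℂ) * (φ x * (starRingEnd ℂ) (φ x))
          + 2 * ((∑ a : Fin n, Complex.normSq (fderiv ℝ φ x (EuclideanSpace.single a 1)) : ℝ) : ℂ) := by
      intro x
      rw [lap_mul hφ' hconjφ x, hlapconj x, hEig x, hkapconj x]
      ring
    have hu1sm : ContDiff ℝ (⊤:ℕ∞) (fun x => (φ x * (starRingEnd ℂ) (φ x)).re) := by
      have h := ((Complex.reCLM).contDiff (n := ((⊤:ℕ∞) : WithTop ℕ∞))).comp hgcsm
      simpa only [Function.comp_def, Complex.reCLM_apply] using h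
    have hgc_eq : ∀ x, φ x * (starRingEnd ℂ) (φ x) = (Complex.normSq (φ x) : ℂ) :=
      fun x => Complex.mul_conj (φ x)
    have hlapu1 : ∀ x, lap (fun y => (φ y * (starRingEnd ℂ) (φ y)).re) x
        = 2 * lam * Complex.normSq (φ x)
          + 2 * ∑ a : Fin n, Complex.normSq (fderiv ℝ φ x (EuclideanSpace.single a 1)) := by
      intro x
      have h := lap_clm Complex.reCLM hgcsm x
      simp only [Complex.reCLM_apply] at h
      rw [h, hlapgc x, hgc_eq x]
      push_cast
      simp
    have hec_ge : ∀ x, -lam * Complex.normSq (φ x)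
        ≤ ∑ a : Fin n, Complex.normSq (fderiv ℝ φ x (EuclideanSpace.single a 1)) := by
      intro x
      have h1 : ‖kap φ φ x‖
          ≤ ∑ a : Fin n, Complex.normSq (fderiv ℝ φ x (EuclideanSpace.single a 1)) := by
        unfold kap
        refine le_trans (norm_sum_le _ _) ?_
        refine Finset.sum_le_sum fun a _ => ?_
        rw [norm_mul]
        exact le_of_eq (by rw [Complex.normSq_eq_norm_sq]; ring)
      rw [hConf x, norm_mul, norm_pow] at h1
      have h2 : ‖((lam:ℂ))‖ = -lam := by
        rw [Complex.norm_real, Real.norm_eq_abs]; exact abs_of_neg hlam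
      rw [h2, Complex.sq_norm] at h1
      exact h1
    have hperu1 : ∀ (i : Fin n) x, (fun y => (φ y * (starRingEnd ℂ) (φ y)).re) (x + b i)
        = (fun y => (φ y * (starRingEnd ℂ) (φ y)).re) x := by
      intro i x; simp only; rw [hφp i x]
    have hnn : ∀ x, 0 ≤ lap (fun y => (φ y * (starRingEnd ℂ) (φ y)).re) x := by
      intro x
      rw [hlapu1 x]
      have h1 := hec_ge x
      nlinarith [Complex.normSq_nonneg (φ x)]
    have hkill1 : ∀ x, lap (fun y => (φ y * (starRingEnd ℂ) (φ y)).re) x = 0 :=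
      lap_eq_zero_of_nonneg b _ hu1sm hperu1 hnn
    have hec : ∀ x, ∑ a : Fin n, Complex.normSq (fderiv ℝ φ x (EuclideanSpace.single a 1))
        = -lam * Complex.normSq (φ x) := by
      intro x
      have h1 := hkill1 x
      rw [hlapu1 x] at h1
      linarith
    have hlapgc0 : ∀ x, lap (fun y => φ y * (starRingEnd ℂ) (φ y)) x = 0 := by
      intro x
      rw [hlapgc x, hec x, hgc_eq x]
      push_cast
      ring
    -- second kill: (φ conj φ)^2
    have hgcreal : (fun y => (starRingEnd ℂ) (φ y * (starRingEnd ℂ) (φ y)))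
        = fun y => φ y * (starRingEnd ℂ) (φ y) := by
      funext y; rw [map_mul, Complex.conj_conj]; ring
    have hgcdreal : ∀ x v, (starRingEnd ℂ) (fderiv ℝ (fun y => φ y * (starRingEnd ℂ) (φ y)) x v)
        = fderiv ℝ (fun y => φ y * (starRingEnd ℂ) (φ y)) x v := by
      intro x v
      have h1 := fderiv_conj_apply hdgc x v
      rw [hgcreal] at h1
      exact h1.symm
    have hkapgc : ∀ x, kap (fun y => φ y * (starRingEnd ℂ) (φ y))
        (fun y => φ y * (starRingEnd ℂ) (φ y)) x
        = ((∑ a : Fin n, Complex.normSq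
            (fderiv ℝ (fun y => φ y * (starRingEnd ℂ) (φ y)) x (EuclideanSpace.single a 1)) : ℝ) : ℂ) := by
      intro x
      unfold kap
      push_cast
      refine Finset.sum_congr rfl fun a _ => ?_
      calc fderiv ℝ (fun y => φ y * (starRingEnd ℂ) (φ y)) x (EuclideanSpace.single a 1)
            * fderiv ℝ (fun y => φ y * (starRingEnd ℂ) (φ y)) x (EuclideanSpace.single a 1)
          = fderiv ℝ (fun y => φ y * (starRingEnd ℂ) (φ y)) x (EuclideanSpace.single a 1)
            * (starRingEnd ℂ) (fderiv ℝ (fun y => φ y * (starRingEnd ℂ) (φ y)) x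
              (EuclideanSpace.single a 1)) := by rw [hgcdreal]
        _ = _ := Complex.mul_conj _
    have hlapgc2 : ∀ x, lap (fun y => (φ y * (starRingEnd ℂ) (φ y))
          * (φ y * (starRingEnd ℂ) (φ y))) x
        = 2 * ((∑ a : Fin n, Complex.normSq
            (fderiv ℝ (fun y => φ y * (starRingEnd ℂ) (φ y)) x (EuclideanSpace.single a 1)) : ℝ) : ℂ) := by
      intro x
      rw [lap_mul hgcsm hgcsm x, hlapgc0 x, hkapgc x]
      ring
    have hu2sm : ContDiff ℝ (⊤:ℕ∞) (fun x => ((φ x * (starRingEnd ℂ) (φ x))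
        * (φ x * (starRingEnd ℂ) (φ x))).re) := by
      have h := ((Complex.reCLM).contDiff (n := ((⊤:ℕ∞) : WithTop ℕ∞))).comp (hgcsm.mul hgcsm)
      simpa only [Function.comp_def, Complex.reCLM_apply] using h
    have hlapu2 : ∀ x, lap (fun y => ((φ y * (starRingEnd ℂ) (φ y))
          * (φ y * (starRingEnd ℂ) (φ y))).re) x
        = 2 * ∑ a : Fin n, Complex.normSq
            (fderiv ℝ (fun y => φ y * (starRingEnd ℂ) (φ y)) x (EuclideanSpace.single a 1)) := by
      intro x
      have h := lap_clm Complex.reCLM (hgcsm.mul hgcsm) x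
      simp only [Complex.reCLM_apply] at h
      rw [h, hlapgc2 x]
      push_cast
      simp
    have hperu2 : ∀ (i : Fin n) x, (fun y => ((φ y * (starRingEnd ℂ) (φ y))
          * (φ y * (starRingEnd ℂ) (φ y))).re) (x + b i)
        = (fun y => ((φ y * (starRingEnd ℂ) (φ y)) * (φ y * (starRingEnd ℂ) (φ y))).re) x := by
      intro i x; simp only; rw [hφp i x]
    have hnn2 : ∀ x, 0 ≤ lap (fun y => ((φ y * (starRingEnd ℂ) (φ y))
          * (φ y * (starRingEnd ℂ) (φ y))).re) x := by
      intro x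
      rw [hlapu2 x]
      have : 0 ≤ ∑ a : Fin n, Complex.normSq
          (fderiv ℝ (fun y => φ y * (starRingEnd ℂ) (φ y)) x (EuclideanSpace.single a 1)) :=
        Finset.sum_nonneg fun a _ => Complex.normSq_nonneg _
      linarith
    have hkill2 : ∀ x, lap (fun y => ((φ y * (starRingEnd ℂ) (φ y))
          * (φ y * (starRingEnd ℂ) (φ y))).re) x = 0 :=
      lap_eq_zero_of_nonneg b _ hu2sm hperu2 hnn2
    have hdgczero : ∀ x a, fderiv ℝ (fun y => φ y * (starRingEnd ℂ) (φ y)) x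
        (EuclideanSpace.single a 1) = 0 := by
      intro x a
      have h1 := hkill2 x
      rw [hlapu2 x] at h1
      have h2 : ∑ a : Fin n, Complex.normSq
          (fderiv ℝ (fun y => φ y * (starRingEnd ℂ) (φ y)) x (EuclideanSpace.single a 1)) = 0 := by
        linarith
      have h3 := (Finset.sum_eq_zero_iff_of_nonneg
        (fun a _ => Complex.normSq_nonneg _)).1 h2 a (Finset.mem_univ a)
      exact Complex.normSq_eq_zero.1 h3
    have hfderivu1 : ∀ x, fderiv ℝ (fun y => (φ y * (starRingEnd ℂ) (φ y)).re) x = 0 := by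
      intro x
      have hgczero : fderiv ℝ (fun y => φ y * (starRingEnd ℂ) (φ y)) x = 0 :=
        fderiv_eq_zero_of_vanish (hdgczero x)
      have h2 : fderiv ℝ (fun y => Complex.reCLM (φ y * (starRingEnd ℂ) (φ y))) x
          = Complex.reCLM.comp (fderiv ℝ (fun y => φ y * (starRingEnd ℂ) (φ y)) x) :=
        (Complex.reCLM.hasFDerivAt.comp x (hdgc x).hasFDerivAt).fderiv
      rw [hgczero, ContinuousLinearMap.comp_zero] at h2
      simpa using h2
    have hu1const := is_const_of_fderiv_eq_zero (diffble_of_top hu1sm) hfderivu1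
    set c : ℝ := ‖φ 0‖ with hcdef
    have habs : ∀ x, ‖φ x‖ = c := by
      intro x
      have h1 : Complex.normSq (φ x) = Complex.normSq (φ 0) := by
        have h := hu1const x 0
        simp only [hgc_eq, Complex.ofReal_re] at h
        exact h
      rw [hcdef, Complex.norm_def, Complex.norm_def, h1]
    have hcne : c ≠ 0 := by
      intro h0
      obtain ⟨x, y, hxy⟩ := hnc
      have hzx : φ x = 0 := by
        have := habs x; rw [h0] at this; exact norm_eq_zero.1 this
      have hzy : φ y = 0 := by
        have := habs y; rw [h0] at this; exact norm_eq_zero.1 this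
      exact hxy (by rw [hzx, hzy])
    have hcpos : 0 < c := by
      rcases lt_or_eq_of_le (norm_nonneg (φ 0)) with h | h
      · exact hcdef ▸ h
      · exact absurd (hcdef.trans h.symm) hcne
    have hvan : ∀ x, φ x ≠ 0 := by
      intro x hx
      exact hcne (by rw [← habs x, hx, norm_zero])
    have hψeq : ψ = fun x => ((c:ℂ))⁻¹ * φ x := by
      funext x; rw [hψ x, habs x, div_eq_inv_mul]
    refine ⟨hvan, ⟨c, habs⟩, ?_, ?_⟩
    · intro x
      rw [hψeq, lap_const_mul _ hφ' x, hEig x]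
      ring
    · intro x
      rw [hψeq]
      have hterm : ∀ a : Fin n, ‖fderiv ℝ (fun y => ((c:ℂ))⁻¹ * φ y) x
          (EuclideanSpace.single a 1)‖ ^ 2
          = (c⁻¹)^2 * Complex.normSq (fderiv ℝ φ x (EuclideanSpace.single a 1)) := by
        intro a
        rw [fderiv_const_mul_apply (hdφ x) _ _, norm_mul, mul_pow, Complex.sq_norm,
          Complex.sq_norm]
        congr 1
        rw [Complex.normSq_inv, Complex.normSq_ofReal, mul_inv, pow_two]
      rw [Finset.sum_congr rfl (fun a _ => hterm a), ← Finset.mul_sum, hec x]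
      have hns : Complex.normSq (φ x) = c^2 := by rw [← Complex.sq_norm, habs x]
      rw [hns, show (c⁻¹)^2 * (-lam * c^2) = -lam * ((c⁻¹)^2 * c^2) from by ring,
        inv_pow, inv_mul_cancel₀ (pow_ne_zero 2 hcne), mul_one]
  · rintro ⟨hvan, ⟨c, habs⟩, hlapψ, hsum⟩
    have hcne : c ≠ 0 := by
      intro h0
      have := habs 0
      rw [h0] at this
      exact hvan 0 (norm_eq_zero.1 this)
    have hψeq : ψ = fun x => ((c:ℂ))⁻¹ * φ x := by
      funext x; rw [hψ x, habs x, div_eq_inv_mul]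
    have hφeq : φ = fun x => (c:ℂ) * ψ x := by
      funext x
      rw [hψeq]
      have : ((c:ℂ)) ≠ 0 := by exact_mod_cast hcne
      field_simp
    have hψsm : ContDiff ℝ (⊤:ℕ∞) ψ := by
      rw [hψeq]; exact contDiff_const.mul hφ'
    have hψd : Differentiable ℝ ψ := diffble_of_top hψsm
    have hconjψ : ContDiff ℝ (⊤:ℕ∞) (fun x => (starRingEnd ℂ) (ψ x)) := by
      have h := ((Complex.conjCLE : ℂ →L[ℝ] ℂ).contDiff (n := ((⊤:ℕ∞) : WithTop ℕ∞))).comp hψsm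
      simpa [Function.comp_def] using h
    have hψabs1 : ∀ x, ‖ψ x‖ = 1 := by
      intro x
      rw [hψ x, norm_div, Complex.norm_real, Real.norm_eq_abs,
        _root_.abs_of_nonneg (norm_nonneg _)]
      exact div_self (fun h => hvan x (norm_eq_zero.1 h))
    have hψconj : ∀ x, ψ x * (starRingEnd ℂ) (ψ x) = 1 := by
      intro x
      rw [Complex.mul_conj, Complex.normSq_eq_norm_sq, hψabs1 x]
      norm_num
    have hconst : (fun y => ψ y * (starRingEnd ℂ) (ψ y)) = fun _ => (1:ℂ) := funext hψconj
    have hw0 : ∀ x v, (starRingEnd ℂ) (ψ x) * fderiv ℝ ψ x v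
        + (starRingEnd ℂ) ((starRingEnd ℂ) (ψ x) * fderiv ℝ ψ x v) = 0 := by
      intro x v
      have h2 := fderiv_mul_apply (hψd x) ((diffble_of_top hconjψ) x) v
      have hzero1 : fderiv ℝ (fun _ : EuclideanSpace ℝ (Fin n) => (1:ℂ)) x v = 0 := by
        rw [fderiv_fun_const]; rfl
      rw [hconst, hzero1] at h2
      rw [fderiv_conj_apply hψd x v] at h2
      rw [map_mul, Complex.conj_conj]
      linear_combination -h2
    have hkapψ : ∀ x, (∑ a : Fin n, fderiv ℝ ψ x (EuclideanSpace.single a 1)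
        * fderiv ℝ ψ x (EuclideanSpace.single a 1)) = (lam:ℂ) * ψ x ^ 2 := by
      intro x
      have hterm : ∀ a : Fin n, fderiv ℝ ψ x (EuclideanSpace.single a 1)
          * fderiv ℝ ψ x (EuclideanSpace.single a 1)
          = ψ x ^ 2 * (-((Complex.normSq (fderiv ℝ ψ x (EuclideanSpace.single a 1)) : ℝ) : ℂ)) := by
        intro a
        have hw := hw0 x (EuclideanSpace.single a 1)
        set z := fderiv ℝ ψ x (EuclideanSpace.single a 1) with hz
        set w := (starRingEnd ℂ) (ψ x) * z with hwdef
        have hcw : (starRingEnd ℂ) w = -w := by linear_combination hw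
        have hzw : z = ψ x * w := by
          rw [hwdef, ← mul_assoc, hψconj x, one_mul]
        have hww : w * w = -((Complex.normSq w : ℝ) : ℂ) := by
          have h5 := Complex.mul_conj w
          rw [hcw] at h5
          linear_combination -h5
        have hnsw : Complex.normSq w = Complex.normSq z := by
          rw [hwdef, Complex.normSq_mul, Complex.normSq_conj]
          have h6 : Complex.normSq (ψ x) = 1 := by
            rw [Complex.normSq_eq_norm_sq, hψabs1 x]; norm_num
          rw [h6, one_mul]
        calc z * z = ψ x ^ 2 * (w * w) := by rw [hzw]; ring
          _ = _ := by rw [hww, hnsw]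
      rw [Finset.sum_congr rfl (fun a _ => hterm a), ← Finset.mul_sum]
      have hsum2 : (∑ a : Fin n,
          -((Complex.normSq (fderiv ℝ ψ x (EuclideanSpace.single a 1)) : ℝ) : ℂ)) = (lam:ℂ) := by
        have h3 := hsum x
        have h4 : ∑ a : Fin n, Complex.normSq (fderiv ℝ ψ x (EuclideanSpace.single a 1))
            = -lam := by
          rw [← h3]
          exact Finset.sum_congr rfl fun a _ => (Complex.sq_norm _).symm
        rw [Finset.sum_neg_distrib, ← Complex.ofReal_sum, h4]
        push_cast
        ring
      rw [hsum2]
      ring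
    constructor
    · intro x
      conv_lhs => rw [hφeq]
      rw [lap_const_mul _ hψsm x, hlapψ x, hφeq]
      ring
    · intro x
      conv_lhs => rw [hφeq]
      unfold kap
      have hterm : ∀ a : Fin n,
          fderiv ℝ (fun y => (c:ℂ) * ψ y) x (EuclideanSpace.single a 1)
          * fderiv ℝ (fun y => (c:ℂ) * ψ y) x (EuclideanSpace.single a 1)
          = ((c:ℂ) * (c:ℂ)) * (fderiv ℝ ψ x (EuclideanSpace.single a 1)
            * fderiv ℝ ψ x (EuclideanSpace.single a 1)) := by
        intro a
        rw [fderiv_const_mul_apply (hψd x) _ _]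
        ring
      rw [Finset.sum_congr rfl (fun a _ => hterm a), ← Finset.mul_sum, hkapψ x, hφeq]
      ring
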